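/- (Conservation law for W_β, linear case f(u) = u.) Let β : ℝ³ → ℝ be a C² function with Δ_{H¹}β + β = 0, and let u be a C² solution of Δ_{H¹}u + u = 0 on an open set Ω ⊆ ℝ³. Define on Ω: W₁ = β(u_x + 2y·u_t) − u(β_x + 2y·β_t), W₂ = β(u_y − 2x·u_t) − u(β_y − 2x·β_t), W₃ = β[−2x·u_y + 2y·u_x + 4(x²+y²)u_t] + 2u[x·β_y − y·β_x − 2(x²+y²)β_t]. Then ∂W₁/∂x + ∂W₂/∂y + ∂W₃/∂t = 0 at every point of Ω. -/

import Mathlib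

/-!
With the left-invariant fields `X = ∂ₓ + 2y∂ₜ` and `Y = ∂ᵧ - 2x∂ₜ` one has `Δ_{H¹} = X² + Y²`, and the
current is `W = A • X + B • Y` with `A = β Xu - u Xβ`, `B = β Yu - u Yβ`. As `X` and `Y` are
divergence free, `div W = XA + YB = β Δu - u Δβ`, which vanishes because `u` and `β` solve the same
linear equation.
-/

/-- Partial derivative with respect to the first coordinate (x). -/
noncomputable def pdx (u : ℝ × ℝ × ℝ → ℝ) : ℝ × ℝ × ℝ → ℝ :=
  fun p => fderiv ℝ u p (1, 0, 0)

/-- Partial derivative with respect to the second coordinate (y). -/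
noncomputable def pdy (u : ℝ × ℝ × ℝ → ℝ) : ℝ × ℝ × ℝ → ℝ :=
  fun p => fderiv ℝ u p (0, 1, 0)

/-- Partial derivative with respect to the third coordinate (t). -/
noncomputable def pdt (u : ℝ × ℝ × ℝ → ℝ) : ℝ × ℝ × ℝ → ℝ :=
  fun p => fderiv ℝ u p (0, 0, 1)

/-- The Kohn–Laplace operator on the Heisenberg group H¹:
`Δ u = u_xx + u_yy + 4(x²+y²) u_tt + 4y u_xt − 4x u_yt`. -/
noncomputable def KohnLaplace (u : ℝ × ℝ × ℝ → ℝ) : ℝ × ℝ × ℝ → ℝ :=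
  fun p => pdx (pdx u) p + pdy (pdy u) p
    + 4 * (p.1 ^ 2 + p.2.1 ^ 2) * pdt (pdt u) p
    + 4 * p.2.1 * pdt (pdx u) p - 4 * p.1 * pdt (pdy u) p

section
variable {E F : Type*} [NormedAddCommGroup E] [NormedSpace ℝ E] [NormedAddCommGroup F]
  [NormedSpace ℝ F] {f : E → F} {p : E}

theorem ContDiffAt.differentiableAt_fderiv (hf : ContDiffAt ℝ 2 f p) :
    DifferentiableAt ℝ (fderiv ℝ f) p :=
  (hf.fderiv_right (m := 1) (by norm_num)).differentiableAt one_ne_zero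

theorem fderiv_fderiv_apply (hf : DifferentiableAt ℝ (fderiv ℝ f) p) (v w : E) :
    fderiv ℝ (fun q => fderiv ℝ f q v) p w = fderiv ℝ (fderiv ℝ f) p w v := by
  rw [fderiv_clm_apply hf (differentiableAt_const v)]
  simp

end

section
variable {E : Type*} [NormedAddCommGroup E] [NormedSpace ℝ E]

noncomputable def derivAlong (V : E → E) (f : E → ℝ) : E → ℝ :=
  fun q => fderiv ℝ f q (V q)

noncomputable def wronskianAlong (V : E → E) (f g : E → ℝ) : E → ℝ :=
  f * derivAlong V g - g * derivAlong V f

variable {V : E → E} {f g : E → ℝ} {p : E}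

theorem derivAlong_sub (hf : DifferentiableAt ℝ f p) (hg : DifferentiableAt ℝ g p) :
    derivAlong V (f - g) p = derivAlong V f p - derivAlong V g p := by
  unfold derivAlong
  rw [fderiv_sub hf hg, sub_apply]

theorem derivAlong_mul (hf : DifferentiableAt ℝ f p) (hg : DifferentiableAt ℝ g p) :
    derivAlong V (f * g) p = f p * derivAlong V g p + g p * derivAlong V f p := by
  unfold derivAlong
  rw [fderiv_mul hf hg]
  simp

theorem DifferentiableAt.derivAlong (hf : DifferentiableAt ℝ (fderiv ℝ f) p)
    (hV : DifferentiableAt ℝ V p) : DifferentiableAt ℝ (derivAlong V f) p :=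
  hf.clm_apply hV

theorem derivAlong_derivAlong (hf : DifferentiableAt ℝ (fderiv ℝ f) p)
    (hV : DifferentiableAt ℝ V p) :
    derivAlong V (derivAlong V f) p =
      fderiv ℝ (fderiv ℝ f) p (V p) (V p) + fderiv ℝ f p (fderiv ℝ V p (V p)) := by
  unfold derivAlong
  rw [fderiv_clm_apply hf hV]
  simp [add_comm]

theorem ContDiffAt.differentiableAt_wronskianAlong (hf : ContDiffAt ℝ 2 f p)
    (hg : ContDiffAt ℝ 2 g p) (hV : DifferentiableAt ℝ V p) :
    DifferentiableAt ℝ (wronskianAlong V f g) p :=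
  ((hf.differentiableAt two_ne_zero).mul (hg.differentiableAt_fderiv.derivAlong hV)).sub
    ((hg.differentiableAt two_ne_zero).mul (hf.differentiableAt_fderiv.derivAlong hV))

theorem derivAlong_wronskianAlong (hf : ContDiffAt ℝ 2 f p) (hg : ContDiffAt ℝ 2 g p)
    (hV : DifferentiableAt ℝ V p) :
    derivAlong V (wronskianAlong V f g) p =
      f p * derivAlong V (derivAlong V g) p - g p * derivAlong V (derivAlong V f) p := by
  have hf₁ := hf.differentiableAt two_ne_zero
  have hg₁ := hg.differentiableAt two_ne_zero
  have hVf := hf.differentiableAt_fderiv.derivAlong hV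
  have hVg := hg.differentiableAt_fderiv.derivAlong hV
  unfold wronskianAlong
  rw [derivAlong_sub (hf₁.mul hVg) (hg₁.mul hVf), derivAlong_mul hf₁ hVg, derivAlong_mul hg₁ hVf]
  ring

end

def heisX (q : ℝ × ℝ × ℝ) : ℝ × ℝ × ℝ := (1, 0, 2 * q.2.1)

def heisY (q : ℝ × ℝ × ℝ) : ℝ × ℝ × ℝ := (0, 1, -2 * q.1)

noncomputable def divergence (W : ℝ × ℝ × ℝ → ℝ × ℝ × ℝ) (p : ℝ × ℝ × ℝ) : ℝ :=
  pdx (fun q => (W q).1) p + pdy (fun q => (W q).2.1) p + pdt (fun q => (W q).2.2) p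

noncomputable def noetherCurrent (f g : ℝ × ℝ × ℝ → ℝ) (q : ℝ × ℝ × ℝ) : ℝ × ℝ × ℝ :=
  wronskianAlong heisX f g q • heisX q + wronskianAlong heisY f g q • heisY q

theorem heisX_eq (q : ℝ × ℝ × ℝ) : heisX q = (1, 0, 0) + (2 * q.2.1) • (0, 0, 1) := by
  simp [heisX]

theorem heisY_eq (q : ℝ × ℝ × ℝ) : heisY q = (0, 1, 0) + (-2 * q.1) • (0, 0, 1) := by
  simp [heisY]

theorem derivAlong_heisX (f : ℝ × ℝ × ℝ → ℝ) (q : ℝ × ℝ × ℝ) :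
    derivAlong heisX f q = pdx f q + 2 * q.2.1 * pdt f q := by
  rw [derivAlong, heisX_eq, map_add, map_smul, smul_eq_mul]
  rfl

theorem derivAlong_heisY (f : ℝ × ℝ × ℝ → ℝ) (q : ℝ × ℝ × ℝ) :
    derivAlong heisY f q = pdy f q - 2 * q.1 * pdt f q := by
  rw [derivAlong, heisY_eq, map_add, map_smul, smul_eq_mul, neg_mul, neg_mul, sub_eq_add_neg]
  rfl

theorem differentiable_heisX : Differentiable ℝ heisX := by
  unfold heisX; fun_prop

theorem differentiable_heisY : Differentiable ℝ heisY := by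
  unfold heisY; fun_prop

section
variable {f g A B : ℝ × ℝ × ℝ → ℝ} {p : ℝ × ℝ × ℝ}

theorem fderiv_heisX_apply_heisX : fderiv ℝ heisX p (heisX p) = 0 := by
  unfold heisX
  rw [DifferentiableAt.fderiv_prodMk (by fun_prop) (by fun_prop),
    DifferentiableAt.fderiv_prodMk (by fun_prop) (by fun_prop),
    fderiv_const_mul (by fun_prop), fderiv.fst (by fun_prop), fderiv_snd]
  simp

theorem fderiv_heisY_apply_heisY : fderiv ℝ heisY p (heisY p) = 0 := by
  unfold heisY
  rw [DifferentiableAt.fderiv_prodMk (by fun_prop) (by fun_prop),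
    DifferentiableAt.fderiv_prodMk (by fun_prop) (by fun_prop),
    fderiv_const_mul (by fun_prop), fderiv_fst]
  simp

theorem kohnLaplace_eq_derivAlong (hf : ContDiffAt ℝ 2 f p) :
    KohnLaplace f p =
      derivAlong heisX (derivAlong heisX f) p + derivAlong heisY (derivAlong heisY f) p := by
  have hf₂ := hf.differentiableAt_fderiv
  have hsymm := hf.isSymmSndFDerivAt minSmoothness_of_isRCLikeNormedField.le
  rw [derivAlong_derivAlong hf₂ differentiable_heisX.differentiableAt, fderiv_heisX_apply_heisX,
    derivAlong_derivAlong hf₂ differentiable_heisY.differentiableAt, fderiv_heisY_apply_heisY,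
    map_zero, add_zero, add_zero, heisX_eq, heisY_eq]
  unfold KohnLaplace pdx pdy pdt
  simp only [fderiv_fderiv_apply hf₂, map_add, map_smul, add_apply, smul_apply, smul_eq_mul]
  rw [hsymm (1, 0, 0) (0, 0, 1), hsymm (0, 1, 0) (0, 0, 1)]
  ring

theorem divergence_smul_heisX_add_smul_heisY (hA : DifferentiableAt ℝ A p)
    (hB : DifferentiableAt ℝ B p) :
    divergence (fun q => A q • heisX q + B q • heisY q) p =
      derivAlong heisX A p + derivAlong heisY B p := by
  have hW₃ : pdt (fun q => A q * (2 * q.2.1) + B q * (-2 * q.1)) p =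
      2 * p.2.1 * pdt A p - 2 * p.1 * pdt B p := by
    unfold pdt
    rw [fderiv_fun_add (by fun_prop) (by fun_prop), fderiv_fun_mul hA (by fun_prop),
      fderiv_fun_mul hB (by fun_prop), fderiv_const_mul (by fun_prop),
      fderiv_const_mul (by fun_prop), fderiv.fst (by fun_prop), fderiv_snd, fderiv_fst]
    simp only [neg_smul, smul_neg, neg_mul, add_apply, smul_apply, ContinuousLinearMap.comp_apply,
      ContinuousLinearMap.coe_snd', ContinuousLinearMap.coe_fst', smul_eq_mul, mul_zero, zero_add,
      neg_apply, neg_zero]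
    ring
  rw [derivAlong_heisX, derivAlong_heisY]
  simp only [divergence, heisX, heisY, Prod.smul_mk, Prod.mk_add_mk, smul_eq_mul, mul_one,
    mul_zero, add_zero, zero_add, hW₃]
  ring

theorem divergence_noetherCurrent (hf : ContDiffAt ℝ 2 f p) (hg : ContDiffAt ℝ 2 g p) :
    divergence (noetherCurrent f g) p = f p * KohnLaplace g p - g p * KohnLaplace f p := by
  have hX := differentiable_heisX.differentiableAt (x := p)
  have hY := differentiable_heisY.differentiableAt (x := p)
  unfold noetherCurrent
  rw [divergence_smul_heisX_add_smul_heisY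
    (hf.differentiableAt_wronskianAlong hg hX) (hf.differentiableAt_wronskianAlong hg hY),
    derivAlong_wronskianAlong hf hg hX, derivAlong_wronskianAlong hf hg hY,
    kohnLaplace_eq_derivAlong hf, kohnLaplace_eq_derivAlong hg]
  ring

end

/-- conservation law for the Noether symmetry W_β of the linear
Kohn–Laplace equation: if Δ_{H¹}β + β = 0 and u is a C² solution of
Δ_{H¹}u + u = 0 on an open set Ω, then Div(W) = 0 on Ω, where
W₁ = β(u_x + 2y u_t) − u(β_x + 2y β_t),
W₂ = β(u_y − 2x u_t) − u(β_y − 2x β_t),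
W₃ = β(−2x u_y + 2y u_x + 4(x²+y²)u_t) + 2u(x β_y − y β_x − 2(x²+y²)β_t). -/
theorem conservation_law_Wbeta_linear
    (β : ℝ × ℝ × ℝ → ℝ) (hβ : ContDiff ℝ 2 β)
    (hβeq : ∀ p : ℝ × ℝ × ℝ, KohnLaplace β p + β p = 0)
    (Ω : Set (ℝ × ℝ × ℝ)) (hΩ : IsOpen Ω)
    (u : ℝ × ℝ × ℝ → ℝ) (hu : ContDiffOn ℝ 2 u Ω)
    (hsol : ∀ p ∈ Ω, KohnLaplace u p + u p = 0) :
    ∀ p ∈ Ω,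
      pdx (fun q =>
        β q * (pdx u q + 2 * q.2.1 * pdt u q)
          - u q * (pdx β q + 2 * q.2.1 * pdt β q)) p
      + pdy (fun q =>
        β q * (pdy u q - 2 * q.1 * pdt u q)
          - u q * (pdy β q - 2 * q.1 * pdt β q)) p
      + pdt (fun q =>
        β q * (-2 * q.1 * pdy u q + 2 * q.2.1 * pdx u q
            + 4 * (q.1 ^ 2 + q.2.1 ^ 2) * pdt u q)
          + 2 * u q * (q.1 * pdy β q - q.2.1 * pdx β q
            - 2 * (q.1 ^ 2 + q.2.1 ^ 2) * pdt β q)) p = 0 := by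
  intro p hp
  have hu₂ : ContDiffAt ℝ 2 u p := hu.contDiffAt (hΩ.mem_nhds hp)
  have hβ₂ : ContDiffAt ℝ 2 β p := hβ.contDiffAt
  have hdiv : divergence (noetherCurrent β u) p = 0 := by
    rw [divergence_noetherCurrent hβ₂ hu₂]
    linear_combination β p * hsol p hp - u p * hβeq p
  unfold divergence at hdiv
  convert hdiv using 5 <;>
    simp only [noetherCurrent, wronskianAlong, derivAlong_heisX, derivAlong_heisY, heisX, heisY,
      Pi.sub_apply, Pi.mul_apply, Prod.smul_mk, Prod.mk_add_mk, smul_eq_mul] <;> ring
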